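/- Let G be the subgroup of homeomorphisms of [0,1] generated by A and B. Define the relation Φrel on [0,1] by: Φrel(x,y) holds iff (x ∈ [0,1/2] and y = A⁻¹(x)) or (x ∈ [1/2,3/4] and y = B⁻¹(x)) or (x ∈ [3/4,1] and y = A(x)). Then for all x, y ∈ [0,1]: there exists f ∈ G with f(x) = y if and only if (x,y) belongs to the equivalence relation generated by Φrel (the smallest equivalence relation containing Φrel). -/
import Mathlib


/-- The standard generator `A` of Thompson's group `F`, as a map of the real line
(it equals `x/2` on `[0,1/2]`, `x − 1/4` on `[1/2,3/4]`, `2x − 1` on `[3/4,1]`,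
and these formulas extend it to a bijection of `ℝ`). -/
noncomputable def Afun (x : ℝ) : ℝ :=
  if x ≤ 1 / 2 then x / 2 else if x ≤ 3 / 4 then x - 1 / 4 else 2 * x - 1

/-- The inverse of `Afun`. -/
noncomputable def AinvFun (y : ℝ) : ℝ :=
  if y ≤ 1 / 4 then 2 * y else if y ≤ 1 / 2 then y + 1 / 4 else (y + 1) / 2

/-- The standard generator `B` of Thompson's group `F`. -/
noncomputable def Bfun (x : ℝ) : ℝ :=
  if x ≤ 1 / 2 then x
  else if x ≤ 3 / 4 then x / 2 + 1 / 4
  else if x ≤ 7 / 8 then x - 1 / 8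
  else 2 * x - 1

/-- The inverse of `Bfun`. -/
noncomputable def BinvFun (y : ℝ) : ℝ :=
  if y ≤ 1 / 2 then y
  else if y ≤ 5 / 8 then 2 * y - 1 / 2
  else if y ≤ 3 / 4 then y + 1 / 8
  else (y + 1) / 2

/-- The graphing relation `Φrel`: `Φrel x y` iff `x ∈ [0,1/2]` and `y = A⁻¹(x)`, or
`x ∈ [1/2,3/4]` and `y = B⁻¹(x)`, or `x ∈ [3/4,1]` and `y = A(x)`. -/
def PhiRel (x y : ℝ) : Prop :=
  (x ∈ Set.Icc (0 : ℝ) (1 / 2) ∧ y = AinvFun x) ∨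
  (x ∈ Set.Icc (1 / 2 : ℝ) (3 / 4) ∧ y = BinvFun x) ∨
  (x ∈ Set.Icc (3 / 4 : ℝ) 1 ∧ y = Afun x)

lemma Afun_AinvFun (y : ℝ) : Afun (AinvFun y) = y := by
  unfold Afun AinvFun; split_ifs <;> linarith

lemma AinvFun_Afun (x : ℝ) : AinvFun (Afun x) = x := by
  unfold Afun AinvFun; split_ifs <;> linarith

lemma Bfun_BinvFun (y : ℝ) : Bfun (BinvFun y) = y := by
  unfold Bfun BinvFun; split_ifs <;> linarith

lemma BinvFun_Bfun (x : ℝ) : BinvFun (Bfun x) = x := by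
  unfold Bfun BinvFun; split_ifs <;> linarith

lemma Afun_mem {x : ℝ} (hx : x ∈ Set.Icc (0:ℝ) 1) : Afun x ∈ Set.Icc (0:ℝ) 1 := by
  obtain ⟨h0, h1⟩ := hx
  constructor <;> (unfold Afun; split_ifs <;> linarith)

lemma AinvFun_mem {x : ℝ} (hx : x ∈ Set.Icc (0:ℝ) 1) : AinvFun x ∈ Set.Icc (0:ℝ) 1 := by
  obtain ⟨h0, h1⟩ := hx
  constructor <;> (unfold AinvFun; split_ifs <;> linarith)

lemma Bfun_mem {x : ℝ} (hx : x ∈ Set.Icc (0:ℝ) 1) : Bfun x ∈ Set.Icc (0:ℝ) 1 := by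
  obtain ⟨h0, h1⟩ := hx
  constructor <;> (unfold Bfun; split_ifs <;> linarith)

lemma BinvFun_mem {x : ℝ} (hx : x ∈ Set.Icc (0:ℝ) 1) : BinvFun x ∈ Set.Icc (0:ℝ) 1 := by
  obtain ⟨h0, h1⟩ := hx
  constructor <;> (unfold BinvFun; split_ifs <;> linarith)

lemma eqvgen_Afun {x : ℝ} (hx : x ∈ Set.Icc (0:ℝ) 1) :
    Relation.EqvGen PhiRel x (Afun x) := by
  obtain ⟨h0, h1⟩ := hx
  rcases le_or_gt x (3/4) with h | h
  · apply Relation.EqvGen.symm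
    apply Relation.EqvGen.rel
    left
    refine ⟨⟨?_, ?_⟩, (AinvFun_Afun x).symm⟩
    · unfold Afun; split_ifs <;> linarith
    · unfold Afun; split_ifs <;> linarith
  · exact Relation.EqvGen.rel _ _ (Or.inr (Or.inr ⟨⟨h.le, h1⟩, rfl⟩))

lemma eqvgen_Bfun {x : ℝ} (hx : x ∈ Set.Icc (0:ℝ) 1) :
    Relation.EqvGen PhiRel x (Bfun x) := by
  obtain ⟨h0, h1⟩ := hx
  rcases le_or_gt x (1/2) with h | h
  · have hB : Bfun x = x := by unfold Bfun; split_ifs <;> linarith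
    rw [hB]; exact Relation.EqvGen.refl x
  rcases le_or_gt x (7/8) with h2 | h2
  · apply Relation.EqvGen.symm
    apply Relation.EqvGen.rel
    right; left
    refine ⟨⟨?_, ?_⟩, (BinvFun_Bfun x).symm⟩
    · unfold Bfun; split_ifs <;> linarith
    · unfold Bfun; split_ifs <;> linarith
  · have hB : Bfun x = Afun x := by unfold Bfun Afun; split_ifs <;> linarith
    rw [hB]
    exact Relation.EqvGen.rel _ _ (Or.inr (Or.inr ⟨⟨by linarith, h1⟩, rfl⟩))

/-- Let `G` be the subgroup (of bijections of `ℝ` preserving `[0,1]`)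
generated by `A` and `B`.  For `x, y ∈ [0,1]` there exists `f ∈ G` with `f(x) = y`
if and only if `(x,y)` lies in the equivalence relation generated by `Φrel`. -/
theorem statement16 (a b : Equiv.Perm ℝ)
    (ha : ∀ x : ℝ, a x = Afun x) (hb : ∀ x : ℝ, b x = Bfun x)
    (x y : ℝ) (hx : x ∈ Set.Icc (0 : ℝ) 1) (hy : y ∈ Set.Icc (0 : ℝ) 1) :
    (∃ f ∈ Subgroup.closure ({a, b} : Set (Equiv.Perm ℝ)), f x = y) ↔
      Relation.EqvGen PhiRel x y := by
  have hainv : ∀ u : ℝ, a⁻¹ u = AinvFun u := by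
    intro u
    have : a (AinvFun u) = u := by rw [ha]; exact Afun_AinvFun u
    calc a⁻¹ u = a⁻¹ (a (AinvFun u)) := by rw [this]
    _ = AinvFun u := by simp
  have hbinv : ∀ u : ℝ, b⁻¹ u = BinvFun u := by
    intro u
    have : b (BinvFun u) = u := by rw [hb]; exact Bfun_BinvFun u
    calc b⁻¹ u = b⁻¹ (b (BinvFun u)) := by rw [this]
    _ = BinvFun u := by simp
  constructor
  · rintro ⟨f, hf, rfl⟩
    have key : ∀ g ∈ Subgroup.closure ({a, b} : Set (Equiv.Perm ℝ)),
        (∀ z ∈ Set.Icc (0:ℝ) 1, g z ∈ Set.Icc (0:ℝ) 1) ∧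
        (∀ z ∈ Set.Icc (0:ℝ) 1, g⁻¹ z ∈ Set.Icc (0:ℝ) 1) ∧
        (∀ z ∈ Set.Icc (0:ℝ) 1, Relation.EqvGen PhiRel z (g z)) := by
      intro g hg
      induction hg using Subgroup.closure_induction with
      | mem u hu =>
        rcases hu with rfl | rfl
        · exact ⟨fun z hz => by rw [ha]; exact Afun_mem hz,
            fun z hz => by rw [hainv]; exact AinvFun_mem hz,
            fun z hz => by rw [ha]; exact eqvgen_Afun hz⟩
        · exact ⟨fun z hz => by rw [hb]; exact Bfun_mem hz,
            fun z hz => by rw [hbinv]; exact BinvFun_mem hz,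
            fun z hz => by rw [hb]; exact eqvgen_Bfun hz⟩
      | one =>
        exact ⟨fun z hz => by simpa using hz, fun z hz => by simpa using hz,
          fun z _ => by simpa using Relation.EqvGen.refl z⟩
      | mul u v hu hv ihu ihv =>
        refine ⟨fun z hz => ?_, fun z hz => ?_, fun z hz => ?_⟩
        · have : (u * v) z = u (v z) := rfl
          rw [this]; exact ihu.1 _ (ihv.1 z hz)
        · have : (u * v)⁻¹ z = v⁻¹ (u⁻¹ z) := by simp [mul_inv_rev]
          rw [this]; exact ihv.2.1 _ (ihu.2.1 z hz)
        · have : (u * v) z = u (v z) := rfl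
          rw [this]
          exact Relation.EqvGen.trans _ _ _ (ihv.2.2 z hz) (ihu.2.2 _ (ihv.1 z hz))
      | inv u hu ihu =>
        refine ⟨ihu.2.1, fun z hz => by simpa using ihu.1 z hz, fun z hz => ?_⟩
        have h1 : u⁻¹ z ∈ Set.Icc (0:ℝ) 1 := ihu.2.1 z hz
        have h2 : Relation.EqvGen PhiRel (u⁻¹ z) (u (u⁻¹ z)) := ihu.2.2 _ h1
        have h3 : u (u⁻¹ z) = z := by simp
        rw [h3] at h2
        exact Relation.EqvGen.symm _ _ h2
    exact (key f hf).2.2 x hx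
  · intro h
    clear hx hy
    have hamem : a ∈ Subgroup.closure ({a, b} : Set (Equiv.Perm ℝ)) :=
      Subgroup.subset_closure (by simp)
    have hbmem : b ∈ Subgroup.closure ({a, b} : Set (Equiv.Perm ℝ)) :=
      Subgroup.subset_closure (by simp)
    induction h with
    | rel u v huv =>
      rcases huv with ⟨_, rfl⟩ | ⟨_, rfl⟩ | ⟨_, rfl⟩
      · exact ⟨a⁻¹, inv_mem hamem, hainv u⟩
      · exact ⟨b⁻¹, inv_mem hbmem, hbinv u⟩
      · exact ⟨a, hamem, ha u⟩
    | refl u => exact ⟨1, one_mem _, rfl⟩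
    | symm u v _ ih =>
      obtain ⟨f, hf, hfu⟩ := ih
      exact ⟨f⁻¹, inv_mem hf, by rw [← hfu]; simp⟩
    | trans u v w _ _ ih1 ih2 =>
      obtain ⟨f, hf, rfl⟩ := ih1
      obtain ⟨g, hg, rfl⟩ := ih2
      exact ⟨g * f, mul_mem hg hf, rfl⟩
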